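/- arXiv:math/0204178 — 2 statements merged into one kernel-verified Lean document; each statement's English description precedes it below -/
import Mathlib

section
/- Let l ≥ 1 and let A : ℂ → Matrix (Fin l) (Fin l) ℂ be differentiable at a point γ ∈ ℂ. If det(A(γ)) = 0 and the derivative at γ of the function z ↦ det(A(z)) is nonzero (i.e., det A has a simple zero at γ), then the matrix A(γ) has rank l − 1. -/
open Matrix Finset

/-- Determinant of a matrix with column `i` replaced, expanded via Leibniz. -/
lemma det_updateColumn_leibniz {l : ℕ} (M : Matrix (Fin l) (Fin l) ℂ) (i : Fin l)
    (b : Fin l → ℂ) :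
    (M.updateCol i b).det =
      ∑ σ : Equiv.Perm (Fin l), ((Equiv.Perm.sign σ : ℤ) : ℂ) *
        (b (σ i) * ∏ j ∈ Finset.univ.erase i, M (σ j) j) := by
  rw [Matrix.det_apply']
  refine Finset.sum_congr rfl fun σ _ => ?_
  congr 1
  rw [← Finset.mul_prod_erase _ _ (Finset.mem_univ i)]
  rw [Matrix.updateCol_self]
  congr 1
  refine Finset.prod_congr rfl fun j hj => ?_
  rw [Matrix.updateCol_ne (Finset.ne_of_mem_erase hj)]

/-- The rank of `updateColumn M i b` is at most `rank M + 1`. -/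
lemma rank_updateColumn_le {l : ℕ} (M : Matrix (Fin l) (Fin l) ℂ) (i : Fin l)
    (b : Fin l → ℂ) : (M.updateCol i b).rank ≤ M.rank + 1 := by
  classical
  have hle : LinearMap.range (M.updateCol i b).mulVecLin ≤
      LinearMap.range M.mulVecLin ⊔ Submodule.span ℂ {b} := by
    rintro x ⟨v, rfl⟩
    have hx : (M.updateCol i b).mulVec v
        = M.mulVec (Function.update v i 0) + v i • b := by
      ext r
      simp only [Matrix.mulVec, dotProduct, Pi.add_apply, Pi.smul_apply, smul_eq_mul]
      rw [← Finset.add_sum_erase _ _ (Finset.mem_univ i),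
        ← Finset.add_sum_erase _ _ (Finset.mem_univ i)]
      rw [Matrix.updateCol_self, Function.update_self]
      have h1 : ∑ j ∈ Finset.univ.erase i, M.updateCol i b r j * v j
          = ∑ j ∈ Finset.univ.erase i, M r j * Function.update v i 0 j := by
        refine Finset.sum_congr rfl fun j hj => ?_
        rw [Matrix.updateCol_ne (Finset.ne_of_mem_erase hj),
          Function.update_of_ne (Finset.ne_of_mem_erase hj)]
      rw [h1]; ring
    rw [Matrix.mulVecLin_apply, hx]
    exact Submodule.add_mem _
      (Submodule.mem_sup_left ⟨_, rfl⟩)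
      (Submodule.mem_sup_right (Submodule.smul_mem _ _ (Submodule.mem_span_singleton_self b)))
  calc (M.updateCol i b).rank
      ≤ Module.finrank ℂ (LinearMap.range M.mulVecLin ⊔ Submodule.span ℂ {b} :
          Submodule ℂ (Fin l → ℂ)) := Submodule.finrank_mono hle
    _ ≤ Module.finrank ℂ (LinearMap.range M.mulVecLin) +
          Module.finrank ℂ (Submodule.span ℂ ({b} : Set (Fin l → ℂ))) :=
        Submodule.finrank_add_le_finrank_add_finrank _ _
    _ ≤ M.rank + 1 := by
        have : Module.finrank ℂ (Submodule.span ℂ ({b} : Set (Fin l → ℂ))) ≤ 1 := by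
          simpa using finrank_span_le_card ({b} : Set (Fin l → ℂ))
        exact Nat.add_le_add le_rfl this

/-- A square matrix of rank less than its size has zero determinant. -/
lemma det_eq_zero_of_rank_lt {l : ℕ} (M : Matrix (Fin l) (Fin l) ℂ) (h : M.rank < l) :
    M.det = 0 := by
  classical
  rw [← Matrix.exists_mulVec_eq_zero_iff]
  have hker : LinearMap.ker M.mulVecLin ≠ ⊥ := by
    intro hbot
    have := LinearMap.finrank_range_add_finrank_ker M.mulVecLin
    rw [hbot, finrank_bot, add_zero] at this
    simp only [Module.finrank_pi, Fintype.card_fin] at this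
    have hr : M.rank = Module.finrank ℂ (LinearMap.range M.mulVecLin) := rfl
    omega
  obtain ⟨v, hv, hv0⟩ := Submodule.exists_mem_ne_zero_of_ne_bot hker
  exact ⟨v, hv0, hv⟩

/-- If the square matrix-valued function `A` is (entrywise) complex-differentiable at `γ`,
`det (A γ) = 0`, and the derivative of `z ↦ det (A z)` at `γ` is nonzero (a simple zero of
the determinant), then `A γ` has rank `l - 1`. -/
theorem rank_eq_sub_one_of_simple_zero_of_det
    (l : ℕ) (hl : 1 ≤ l) (A : ℂ → Matrix (Fin l) (Fin l) ℂ) (γ : ℂ)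
    (hdiff : ∀ i j : Fin l, DifferentiableAt ℂ (fun z => A z i j) γ)
    (hdet : (A γ).det = 0)
    (hder : deriv (fun z => (A z).det) γ ≠ 0) :
    (A γ).rank = l - 1 := by
  classical
  set B : Matrix (Fin l) (Fin l) ℂ := fun i j => deriv (fun z => A z i j) γ with hBdef
  -- derivative of det via Leibniz formula
  have hD : HasDerivAt (fun z => (A z).det)
      (∑ i : Fin l, ((A γ).updateCol i (fun r => B r i)).det) γ := by
    have key : HasDerivAt (fun z => (A z).det)
        (∑ σ : Equiv.Perm (Fin l), ((Equiv.Perm.sign σ : ℤ) : ℂ) *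
          ∑ i : Fin l, (∏ j ∈ Finset.univ.erase i, A γ (σ j) j) • B (σ i) i) γ := by
      simp only [Matrix.det_apply']
      apply HasDerivAt.fun_sum
      intro σ _
      exact (HasDerivAt.fun_finsetProd
        (fun i _ => ((hdiff (σ i) i).hasDerivAt))).const_mul _
    convert key using 1
    simp only [Finset.mul_sum, smul_eq_mul]
    rw [Finset.sum_comm]
    refine Finset.sum_congr rfl fun i _ => ?_
    rw [det_updateColumn_leibniz]
    refine Finset.sum_congr rfl fun σ _ => ?_
    ring
  -- rank < l from det = 0
  have hrank_lt : (A γ).rank < l := by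
    by_contra h
    push_neg at h
    have hle := (A γ).rank_le_card_width
    simp only [Fintype.card_fin] at hle
    have heq : (A γ).rank = l := le_antisymm hle h
    -- rank = l means full rank, so kernel is trivial, contradicting det = 0
    obtain ⟨v, hv0, hv⟩ := (Matrix.exists_mulVec_eq_zero_iff).mpr hdet
    have hrn := LinearMap.finrank_range_add_finrank_ker (A γ).mulVecLin
    simp only [Module.finrank_pi, Fintype.card_fin] at hrn
    rw [show Module.finrank ℂ ↥(LinearMap.range (A γ).mulVecLin) = (A γ).rank from rfl,
      heq] at hrn
    have hker0 : Module.finrank ℂ (LinearMap.ker (A γ).mulVecLin) = 0 := by omega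
    have : LinearMap.ker (A γ).mulVecLin = ⊥ :=
      Submodule.finrank_eq_zero.mp hker0
    have hvmem : v ∈ LinearMap.ker (A γ).mulVecLin := hv
    rw [this, Submodule.mem_bot] at hvmem
    exact hv0 hvmem
  -- if rank ≤ l - 2, all the updateColumn determinants vanish, so deriv = 0
  by_contra hne
  have hrank_le : (A γ).rank + 1 < l := by omega
  have hzero : ∀ i : Fin l, ((A γ).updateCol i (fun r => B r i)).det = 0 := by
    intro i
    apply det_eq_zero_of_rank_lt
    calc ((A γ).updateCol i fun r => B r i).rank ≤ (A γ).rank + 1 :=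
          rank_updateColumn_le _ _ _
      _ < l := hrank_le
  apply hder
  rw [hD.deriv]
  simp [hzero]
end

section
/- Let l ≥ 1 and let A : ℂ → Matrix (Fin l) (Fin l) ℂ be differentiable at a point γ ∈ ℂ, with det(A(γ)) = 0 and the derivative at γ of z ↦ det(A(z)) nonzero. Then the kernel of the linear map v ↦ A(γ)·v on ℂ^l (i.e., mulVec by A(γ)) is one-dimensional; consequently there exists a nonzero vector α with A(γ)·α = 0, and any two solutions of A(γ)·v = 0 with one of them nonzero are proportional: if A(γ)·v = 0, A(γ)·w = 0 and v ≠ 0, then there exists c ∈ ℂ with w = c • v. -/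
open Matrix

/-- The determinant as a continuous multilinear map of the rows. -/
noncomputable def detCML (l : ℕ) : ContinuousMultilinearMap ℂ (fun _ : Fin l => Fin l → ℂ) ℂ :=
  MultilinearMap.mkContinuous
    (Matrix.detRowAlternating (R := ℂ) (n := Fin l)).toMultilinearMap
    (Nat.factorial l) (by
      intro m
      have hdet : (Matrix.detRowAlternating (R := ℂ) (n := Fin l)).toMultilinearMap m
          = ∑ σ : Equiv.Perm (Fin l), Equiv.Perm.sign σ • ∏ i, m (σ i) i := by
        exact Eq.trans
          (rfl : (Matrix.detRowAlternating (R := ℂ) (n := Fin l)).toMultilinearMap m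
            = Matrix.det (Matrix.of m)) (Matrix.det_apply _)
      rw [hdet]
      calc ‖∑ σ : Equiv.Perm (Fin l), Equiv.Perm.sign σ • ∏ i, m (σ i) i‖
          ≤ ∑ σ : Equiv.Perm (Fin l), ‖Equiv.Perm.sign σ • ∏ i, m (σ i) i‖ :=
            norm_sum_le _ _
        _ ≤ ∑ _σ : Equiv.Perm (Fin l), ∏ i, ‖m i‖ := by
            apply Finset.sum_le_sum
            intro σ _
            have h1 : ‖Equiv.Perm.sign σ • ∏ i, m (σ i) i‖ = ‖∏ i, m (σ i) i‖ := by
              rcases Int.units_eq_one_or (Equiv.Perm.sign σ) with h | h <;>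
                simp [h, Units.smul_def]
            rw [h1, norm_prod]
            have h2 : ∀ i : Fin l, ‖m (σ i) i‖ ≤ ‖m (σ i)‖ := fun i =>
              norm_le_pi_norm (m (σ i)) i
            calc ∏ i, ‖m (σ i) i‖ ≤ ∏ i, ‖m (σ i)‖ :=
                  Finset.prod_le_prod (fun i _ => norm_nonneg _) (fun i _ => h2 i)
              _ = ∏ i, ‖m i‖ := Equiv.prod_comp σ (fun j : Fin l => ‖m j‖)
        _ = (Nat.factorial l : ℝ) * ∏ i, ‖m i‖ := by
            rw [Finset.sum_const, Finset.card_univ, Fintype.card_perm, Fintype.card_fin, nsmul_eq_mul])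

theorem detCML_apply (l : ℕ) (m : Fin l → Fin l → ℂ) :
    detCML l m = Matrix.det (Matrix.of m) := rfl

/-- At a simple zero `γ` of the determinant of an (entrywise) differentiable square
matrix-valued function `A`, the kernel of `v ↦ (A γ).mulVec v` is one-dimensional; hence
there is a nonzero vector `α` with `(A γ).mulVec α = 0` (the Tyurin parameter), and any two
solutions of `(A γ).mulVec v = 0`, one of them nonzero, are proportional. -/
theorem kernel_one_dimensional_of_simple_zero_of_det
    (l : ℕ) (hl : 1 ≤ l) (A : ℂ → Matrix (Fin l) (Fin l) ℂ) (γ : ℂ)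
    (hdiff : ∀ i j : Fin l, DifferentiableAt ℂ (fun z => A z i j) γ)
    (hdet : (A γ).det = 0)
    (hder : deriv (fun z => (A z).det) γ ≠ 0) :
    Module.finrank ℂ (LinearMap.ker (A γ).mulVecLin) = 1 ∧
    (∃ α : Fin l → ℂ, α ≠ 0 ∧ (A γ).mulVec α = 0) ∧
    (∀ v w : Fin l → ℂ, (A γ).mulVec v = 0 → (A γ).mulVec w = 0 → v ≠ 0 →
      ∃ c : ℂ, w = c • v) := by
  classical
  set K := LinearMap.ker (A γ).mulVecLin with hKdef
  obtain ⟨α, hα0, hαv⟩ := (Matrix.exists_mulVec_eq_zero_iff (M := A γ)).mpr hdet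
  -- step 1: finrank K ≤ 1
  have hle : Module.finrank ℂ K ≤ 1 := by
    by_contra hgt
    push_neg at hgt
    -- the matrix-valued function as a curve in the Pi type
    have hg : HasDerivAt (fun z => (fun i j => A z i j : Fin l → Fin l → ℂ))
        (fun i j => deriv (fun z => A z i j) γ) γ := by
      rw [hasDerivAt_pi]
      intro i
      rw [hasDerivAt_pi]
      intro j
      exact (hdiff i j).hasDerivAt
    set B : Fin l → Fin l → ℂ := fun i j => deriv (fun z => A z i j) γ with hB
    have hF : HasDerivAt (fun z => detCML l (fun i j => A z i j))
        ((detCML l).linearDeriv (fun i j => A γ i j) B) γ :=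
      (ContinuousMultilinearMap.hasFDerivAt (detCML l) (fun i j => A γ i j)).comp_hasDerivAt γ hg
    have hFdet : HasDerivAt (fun z => (A z).det)
        ((detCML l).linearDeriv (fun i j => A γ i j) B) γ := hF
    -- each summand of the derivative vanishes
    have hzero : ∀ i : Fin l,
        detCML l (Function.update (fun i j => A γ i j : Fin l → Fin l → ℂ) i (B i)) = 0 := by
      intro i
      set r : Fin l → ℂ := B i with hr
      -- linear functional v ↦ r ⬝ᵥ v
      let φ : (Fin l → ℂ) →ₗ[ℂ] ℂ :=
        { toFun := fun v => r ⬝ᵥ v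
          map_add' := fun x y => by simp [dotProduct, mul_add, Finset.sum_add_distrib]
          map_smul' := fun c x => by
            simp only [dotProduct, Pi.smul_apply, smul_eq_mul, RingHom.id_apply,
              Finset.mul_sum]
            exact Finset.sum_congr rfl fun j _ => by ring }
      let ψ : K →ₗ[ℂ] ℂ := φ.comp K.subtype
      have hrank : Module.finrank ℂ (LinearMap.range ψ) + Module.finrank ℂ (LinearMap.ker ψ)
          = Module.finrank ℂ K := LinearMap.finrank_range_add_finrank_ker ψ
      have hrange : Module.finrank ℂ (LinearMap.range ψ) ≤ 1 := by
        simpa using (LinearMap.range ψ).finrank_le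
      have hkerpos : 0 < Module.finrank ℂ (LinearMap.ker ψ) := by omega
      have : Nontrivial (LinearMap.ker ψ) := Module.nontrivial_of_finrank_pos hkerpos
      obtain ⟨x, hx0⟩ := exists_ne (0 : LinearMap.ker ψ)
      set v : Fin l → ℂ := ((x : K) : Fin l → ℂ) with hv
      have hv0 : v ≠ 0 := by
        intro h
        apply hx0
        have : (x : K) = 0 := Subtype.ext h
        exact Subtype.ext this
      have hvK : (A γ).mulVec v = 0 := (x : K).2
      have hvr : r ⬝ᵥ v = 0 := x.2
      have hdet0 : Matrix.det
          (Matrix.of (Function.update (fun i j => A γ i j : Fin l → Fin l → ℂ) i r)) = 0 := by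
        rw [← Matrix.exists_mulVec_eq_zero_iff]
        refine ⟨v, hv0, ?_⟩
        funext j
        by_cases hji : j = i
        · subst hji
          simpa [Matrix.mulVec, Matrix.of_apply, Function.update_self] using hvr
        · have := congrFun hvK j
          simpa [Matrix.mulVec, Matrix.of_apply, Function.update_of_ne hji] using this
      rw [detCML_apply]
      exact hdet0
    have hD : (detCML l).linearDeriv (fun i j => A γ i j) B = 0 := by
      rw [ContinuousMultilinearMap.linearDeriv_apply]
      exact Finset.sum_eq_zero fun i _ => hzero i
    exact hder (by rw [hFdet.deriv, hD])
  -- step 2: finrank K ≥ 1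
  have hαK : α ∈ K := by
    rw [hKdef, LinearMap.mem_ker]
    exact hαv
  have hge : 0 < Module.finrank ℂ K := by
    have : Nontrivial K := ⟨⟨⟨α, hαK⟩, 0, by simpa [Subtype.ext_iff] using hα0⟩⟩
    exact Module.finrank_pos
  have hK1 : Module.finrank ℂ K = 1 := le_antisymm hle hge
  refine ⟨hK1, ⟨α, hα0, hαv⟩, ?_⟩
  intro v w hv hw hv0
  have hvK : v ∈ K := by rw [hKdef, LinearMap.mem_ker]; exact hv
  have hwK : w ∈ K := by rw [hKdef, LinearMap.mem_ker]; exact hw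
  have hspan : Submodule.span ℂ {v} = K := by
    apply Submodule.eq_of_le_of_finrank_le
    · rwa [Submodule.span_singleton_le_iff_mem]
    · rw [hK1, finrank_span_singleton hv0]
  rw [← hspan] at hwK
  obtain ⟨c, hc⟩ := Submodule.mem_span_singleton.mp hwK
  exact ⟨c, hc.symm⟩
end
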